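/- Let T be a rooted binary tree shape with n leaves having an internal vertex z with children a and a leaf l, where a is internal with child subtrees T_1 and T_2 of leaf counts n_1 ≥ n_2 with n_1 + n_2 ≥ 3. Let T' be the shape obtained from T by replacing the subtree below z with the shape whose root has children T_1 and an internal vertex b, where b has children T_2 and the leaf l. Then c_5(T) ≥ c_5(T'), and if n ≥ 7 then c_5(T) > c_5(T'); moreover, for the subtrees below z, c_5(T_z) − c_5(T'_z) = C(n_1, 3)·n_2. -/

import Mathlib

/-! ## Rooted binary trees, shapes, restriction, distributions -/

/-- Rooted binary trees with leaves labelled by `α`: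
a tree is either a single (labelled) leaf, or an (ordered) pair of subtrees. -/
inductive RBT (α : Type) : Type
  | leaf (a : α) : RBT α
  | node (l r : RBT α) : RBT α
  deriving DecidableEq

namespace RBT

variable {α β : Type}

/-- The multiset of leaf labels of a tree. -/
def leaves : RBT α → Multiset α
  | leaf a => {a}
  | node l r => leaves l + leaves r

/-- The number of leaves of a tree. -/
def numLeaves : RBT α → ℕ
  | leaf _ => 1
  | node l r => numLeaves l + numLeaves r

/-- Relabel the leaves of a tree. -/
def map (f : α → β) : RBT α → RBT β
  | leaf a => leaf (f a)
  | node l r => node (map f l) (map f r)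

end RBT

/-- Unlabelled rooted binary trees. -/
abbrev UTree : Type := RBT Unit

namespace RBT

variable {α : Type}

/-- Forget the leaf labels of a tree. -/
def forget (t : RBT α) : UTree := t.map fun _ => ()

/-- Structural comparison on unlabelled trees (a leaf is smaller than an internal
node; internal nodes are compared lexicographically on their children). -/
def cmpT : UTree → UTree → Ordering
  | leaf _, leaf _ => .eq
  | leaf _, node _ _ => .lt
  | node _ _, leaf _ => .gt
  | node a b, node c d => (cmpT a c).then (cmpT b d)

/-- Canonical form (AHU) of an unlabelled rooted binary tree: recursively put the
two children of every internal vertex in nondecreasing `cmpT` order.  Two rooted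
binary trees are isomorphic (equal as *shapes*) iff their canonical forms are
equal, so canonical forms faithfully encode the set `RB_U` of tree shapes. -/
def canon : UTree → UTree
  | leaf a => leaf a
  | node l r =>
      let l' := canon l
      let r' := canon r
      if cmpT l' r' = Ordering.gt then node r' l' else node l' r'

/-- The shape (leaf-relabelling isomorphism class, encoded as a canonical form)
of a labelled tree. -/
def shape (t : RBT α) : UTree := canon (forget t)

/-- Restriction `T|_A` of a tree to the leaves with labels in `A`: delete all
leaves outside `A` and suppress the resulting degree-two vertices (the result is
rooted at the most recent common ancestor of `A`); `none` if no leaf survives. -/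
def restrict [DecidableEq α] (A : Finset α) : RBT α → Option (RBT α)
  | leaf a => if a ∈ A then some (leaf a) else none
  | node l r =>
      match restrict A l, restrict A r with
      | some l', some r' => some (node l' r')
      | some l', none => some l'
      | none, some r' => some r'
      | none, none => none

end RBT

/-- `T ∈ RB_L(n)`: the leaves of `T` are labelled bijectively by `[n] = {0, …, n-1}`. -/
def IsPhylo (n : ℕ) (T : RBT ℕ) : Prop := T.leaves = Multiset.range n

instance (n : ℕ) (T : RBT ℕ) : Decidable (IsPhylo n T) :=
  inferInstanceAs (Decidable (T.leaves = Multiset.range n))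

/-- `p` is a probability distribution on `RB_L(n)` (viewed as a vector with
coordinates indexed by labelled trees): nonnegative, supported on `RB_L(n)`,
with total mass one. -/
structure IsDist (n : ℕ) (p : RBT ℕ → ℝ) : Prop where
  nonneg : ∀ T, 0 ≤ p T
  supp : ∀ T, ¬ IsPhylo n T → p T = 0
  total : HasSum p 1

/-- `p` is exchangeable: relabelling the leaves by any permutation of `[n]`
does not change probabilities. -/
def Exchangeable (n : ℕ) (p : RBT ℕ → ℝ) : Prop :=
  ∀ σ : Equiv.Perm ℕ, (∀ i, i < n → σ i < n) → ∀ T : RBT ℕ, p (T.map ⇑σ) = p T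

/-- `EX_n`: the exchangeable probability distributions on `RB_L(n)`. -/
def EX (n : ℕ) : Set (RBT ℕ → ℝ) := {p | IsDist n p ∧ Exchangeable n p}

/-- `O(u)`: the labelled trees in `RB_L(n)` whose shape is (the shape of) `u`. -/
def orbitSet (n : ℕ) (u : UTree) : Set (RBT ℕ) :=
  {T | IsPhylo n T ∧ T.shape = RBT.canon u}

/-- `p_u`: the exchangeable distribution that is uniform on `O(u)` and zero
elsewhere. -/
noncomputable def pShape (n : ℕ) (u : UTree) : RBT ℕ → ℝ := fun T =>
  if IsPhylo n T ∧ T.shape = RBT.canon u then ((orbitSet n u).ncard : ℝ)⁻¹ else 0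

/-- Marginalization map `π_n` from distributions on `RB_L(m)` to distributions on
`RB_L(n)`: `π_n(p)(T) = Σ_{S ∈ RB_L(m), S|_{[n]} = T} p(S)`. -/
noncomputable def marg (m n : ℕ) (p : RBT ℕ → ℝ) : RBT ℕ → ℝ := fun T =>
  ∑' S : RBT ℕ, if IsPhylo m S ∧ RBT.restrict (Finset.range n) S = some T then p S else 0

/-- `EX_n^m = π_n(EX_m)`: the `m`-sampling consistent exchangeable distributions
on `RB_L(n)`. -/
def EXP (n m : ℕ) : Set (RBT ℕ → ℝ) := marg m n '' EX m

/-- `EX_n^∞ = ⋂_{m ≥ n} EX_n^m`: the exchangeable and (infinitely) sampling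
consistent distributions on `RB_L(n)`. -/
def EXinf (n : ℕ) : Set (RBT ℕ → ℝ) := ⋂ (m : ℕ) (_ : n ≤ m), EXP n m

/-- The shapes with `n` leaves (`RB_U(n)`), encoded as canonical forms. -/
def ShapeOn (n : ℕ) : Type := {u : UTree // RBT.canon u = u ∧ u.numLeaves = n}

/-! ## Particular shapes -/

/-- The comb (caterpillar) shape `Comb_k` with `k` leaves. -/
def combU : ℕ → UTree
  | 0 => .leaf ()
  | 1 => .leaf ()
  | n + 2 => .node (.leaf ()) (combU (n + 1))

/-- `comb(t, k)`: the comb with `k` leaves in which one of the two deepest leaves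
is replaced by the tree `t`. -/
def combWith (t : UTree) : ℕ → UTree
  | 0 => t
  | 1 => t
  | n + 2 => .node (.leaf ()) (combWith t (n + 1))

/-- The balanced shape `Bal_4` on four leaves (two cherries joined at the root). -/
def bal4U : UTree := .node (.node (.leaf ()) (.leaf ())) (.node (.leaf ()) (.leaf ()))

/-- The giraffe shape `Gir_5 = comb(Bal_4, 2)` on five leaves. -/
def gir5U : UTree := combWith bal4U 2

/-- The balanced shape `Bal_5` on five leaves (a cherry and a three-leaf comb
joined at the root). -/
def bal5U : UTree := .node (.node (.leaf ()) (.leaf ())) (combU 3)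

/-- `bicomb(a, b)`: the shape obtained by joining `Comb_a` and `Comb_b` at a new
root. -/
def bicombU (a b : ℕ) : UTree := .node (combU a) (combU b)

/-- The complete balanced binary tree with `2^k` leaves. -/
def fullBal : ℕ → UTree
  | 0 => .leaf ()
  | k + 1 => .node (fullBal k) (fullBal k)

/-- A shape is maximally balanced if at every internal vertex the numbers of
leaves of the two child subtrees differ by at most one. -/
def IsMaxBalanced : UTree → Prop
  | .leaf _ => True
  | .node l r =>
      (l.numLeaves ≤ r.numLeaves + 1 ∧ r.numLeaves ≤ l.numLeaves + 1)
        ∧ IsMaxBalanced l ∧ IsMaxBalanced r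

/-! ## Counting restriction subtrees -/

/-- Label the leaves of an unlabelled tree `0, 1, 2, …` from left to right
(auxiliary function threading the next fresh label). -/
def labelFrom : UTree → ℕ → RBT ℕ × ℕ
  | .leaf _, k => (.leaf k, k + 1)
  | .node l r, k =>
      let pl := labelFrom l k
      let pr := labelFrom r pl.2
      (.node pl.1 pr.1, pr.2)

/-- A labelled representative of an unlabelled tree, with distinct leaf labels. -/
def label (u : UTree) : RBT ℕ := (labelFrom u 0).1

/-- The number of `k`-element subsets `A` of the leaves of (a labelled
representative of) `u` such that the restriction tree `u|_A` has shape `s`. -/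
def countRestr (u : UTree) (s : UTree) (k : ℕ) : ℕ :=
  (((label u).leaves.toFinset.powersetCard k).filter
    (fun A => Option.map RBT.shape (RBT.restrict A (label u)) = some (RBT.canon s))).card

/-- `c_5(u)`: the number of `5`-element subsets of the leaves of `u` whose
restriction tree is the five-leaf comb. -/
def c5 (u : UTree) : ℕ := countRestr u (combU 5) 5

/-! ## One-hole contexts (for subtree-swapping statements) -/

/-- One-hole contexts for unlabelled rooted binary trees: a position in a tree at
which a subtree may be substituted. -/
inductive Ctx : Type
  | hole : Ctx
  | nodeL (c : Ctx) (r : UTree) : Ctx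
  | nodeR (l : UTree) (c : Ctx) : Ctx

/-- Fill the hole of a context with a tree. -/
def Ctx.fill : Ctx → UTree → UTree
  | .hole, t => t
  | .nodeL c r, t => .node (c.fill t) r
  | .nodeR l c, t => .node l (c.fill t)

/-! ## The multinomial model -/

/-- A multiset of edges of a tree shape, encoded as the shape with a
multiplicity attached to every vertex (each vertex stands for the edge directly
above it; the root vertex stands for the root edge of the extended tree). -/
inductive MTree : Type
  | leaf (k : ℕ) : MTree
  | node (k : ℕ) (l r : MTree) : MTree
  deriving DecidableEq

namespace MTree

/-- The underlying tree shape of a multiplicity assignment. -/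
def strip : MTree → UTree
  | leaf _ => .leaf ()
  | node _ l r => .node (strip l) (strip r)

/-- The total number of chosen edges (with multiplicity). -/
def total : MTree → ℕ
  | leaf k => k
  | node k l r => k + total l + total r

/-- The product of the factorials of the multiplicities (denominator of the
multinomial coefficient). -/
def factProd : MTree → ℕ
  | leaf k => k.factorial
  | node k l r => k.factorial * factProd l * factProd r

/-- The product `Π_e t_e^{m_A(e)}` of edge-parameter powers, for the parameter
vector assigning `c` to every pendant edge and `0` to every other edge. -/
noncomputable def wProd (c : ℝ) : MTree → ℝ
  | leaf k => c ^ k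
  | node k l r => (0 : ℝ) ^ k * wProd c l * wProd c r

/-- Join two optional trees at a new root. -/
def mergeO : Option UTree → Option UTree → Option UTree
  | some l, some r => some (.node l r)
  | some l, none => some l
  | none, some r => some r
  | none, none => none

/-- Attach `k` new leaves along the edge above an (optional) already-built tree. -/
def attach : ℕ → Option UTree → Option UTree
  | 0, s => s
  | k + 1, s =>
      match attach k s with
      | none => some (.leaf ())
      | some t => some (.node (.leaf ()) t)

/-- `T_A`: attach one new leaf to an edge for each of its occurrences in the
multiset `A`, and restrict the resulting tree to the new leaves. -/
def build : MTree → Option UTree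
  | leaf k => attach k none
  | node k l r => attach k (mergeO (build l) (build r))

end MTree

/-- The probability, under the multinomial model on the shape `T` (with edge
parameter `c` on every pendant edge and `0` on every other edge), that a random
multiset `A` of `n` edges yields a tree `T_A` of shape `s`:
`d(s) = Σ_{A, T_A = s} C(n; m_A) Π_e t_e^{m_A(e)}`. -/
noncomputable def multinomDist (T : UTree) (c : ℝ) (n : ℕ) (s : UTree) : ℝ :=
  ∑' a : MTree,
    if a.strip = T ∧ a.total = n ∧ Option.map RBT.canon a.build = some (RBT.canon s) then
      ((n.factorial : ℝ) / (a.factProd : ℝ)) * MTree.wProd c a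
    else 0

/-! A `k`-subset of the leaves of `L ∗ R` (`k ≥ 4`) restricts to a comb either inside
one side, or as a single leaf on one side together with a `(k-1)`-comb on the other;
hence `c_k(L ∗ R) = c_k L + c_k R + |L| c_{k-1} R + c_{k-1} L |R|`, while `c_3 T = C(|T|, 3)`.
Applied to the subtrees below `z`, this gives the differences `C(n₁,2) n₂` for `c_4` and
`C(n₁,3) n₂` for `c_5`. Passing upwards through a vertex whose other child has `m` leaves
keeps the `c_4`-difference and adds `m` times it to the `c_5`-difference, so
`c_5(T) - c_5(T') = C(n₁,3) n₂ + C(n₁,2) n₂ (n - n₁ - n₂ - 1)`. -/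

open Finset

theorem Finset.sum_powerset_union_of_disjoint {ι M : Type*} [DecidableEq ι] [AddCommMonoid M]
    {S T : Finset ι} (h : Disjoint S T) (f : Finset ι → M) :
    ∑ A ∈ (S ∪ T).powerset, f A = ∑ A ∈ S.powerset, ∑ B ∈ T.powerset, f (A ∪ B) := by
  rw [← sum_product']
  refine sum_nbij' (fun A => (A ∩ S, A ∩ T)) (fun p => p.1 ∪ p.2) ?_ ?_ ?_ ?_ ?_
  · intro A _
    simp
  · rintro ⟨A, B⟩ hAB
    simp only [mem_product, mem_powerset] at hAB ⊢
    exact union_subset_union hAB.1 hAB.2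
  · intro A hA
    simpa [← inter_union_distrib_left] using (mem_powerset.1 hA)
  · rintro ⟨A, B⟩ hAB
    simp only [mem_product, mem_powerset] at hAB
    simp only [union_inter_distrib_right, inter_eq_left.2 hAB.1, inter_eq_left.2 hAB.2,
      disjoint_iff_inter_eq_empty.1 (h.mono_left hAB.1),
      disjoint_iff_inter_eq_empty.1 (h.symm.mono_left hAB.2), union_empty, empty_union]
  · intro A hA
    simp [← inter_union_distrib_left, inter_eq_left.2 (mem_powerset.1 hA)]

namespace RBT

variable {α β : Type}

theorem numLeaves_pos (t : RBT α) : 0 < t.numLeaves := by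
  induction t with
  | leaf => exact Nat.one_pos
  | node l r ihl ihr => simp only [numLeaves]; omega

theorem card_leaves (t : RBT α) : Multiset.card t.leaves = t.numLeaves := by
  induction t with
  | leaf => rfl
  | node l r ihl ihr => simp [leaves, numLeaves, ihl, ihr]

theorem leaves_map (f : α → β) (t : RBT α) : (t.map f).leaves = t.leaves.map f := by
  induction t with
  | leaf => rfl
  | node l r ihl ihr => simp [map, leaves, ihl, ihr]

theorem numLeaves_map (f : α → β) (t : RBT α) : (t.map f).numLeaves = t.numLeaves := by
  rw [← card_leaves, leaves_map, Multiset.card_map, card_leaves]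

theorem map_map {γ : Type} (f : α → β) (g : β → γ) (t : RBT α) :
    (t.map f).map g = t.map (g ∘ f) := by
  induction t with
  | leaf => rfl
  | node l r ihl ihr => simp [map, ihl, ihr]

theorem shape_map (f : α → β) (t : RBT α) : (t.map f).shape = t.shape := by
  rw [shape, shape, forget, forget, map_map]

theorem numLeaves_canon (u : UTree) : (canon u).numLeaves = u.numLeaves := by
  induction u with
  | leaf => rfl
  | node l r ihl ihr =>
    simp only [canon]
    split <;> simp only [numLeaves, ihl, ihr, Nat.add_comm]

theorem numLeaves_shape (t : RBT α) : t.shape.numLeaves = t.numLeaves := by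
  rw [shape, numLeaves_canon, forget, numLeaves_map]

theorem canon_combU : ∀ n, canon (combU n) = combU n
  | 0 | 1 => rfl
  | n + 2 => by
    simp only [combU, canon, canon_combU (n + 1)]
    rw [if_neg (by cases combU (n + 1) <;> simp [cmpT])]

theorem numLeaves_combU : ∀ n, 1 ≤ n → (combU n).numLeaves = n
  | 0, h => absurd h (by norm_num)
  | 1, _ => rfl
  | n + 2, _ => by
    simp only [combU, numLeaves, numLeaves_combU (n + 1) (by omega)]
    omega

def joinShape (x y : UTree) : UTree := if cmpT x y = .gt then .node y x else .node x y

theorem shape_node (a b : RBT α) : (node a b).shape = joinShape a.shape b.shape := rfl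

theorem joinShape_eq_node_leaf_iff {x y u : UTree} :
    joinShape x y = .node (.leaf ()) u ↔ (x = .leaf () ∧ y = u) ∨ (x = u ∧ y = .leaf ()) := by
  unfold joinShape
  split_ifs with h
  · constructor
    · rintro ⟨⟩; exact Or.inr ⟨rfl, rfl⟩
    · rintro (⟨rfl, rfl⟩ | ⟨rfl, rfl⟩)
      · cases y <;> simp_all [cmpT]
      · rfl
  · constructor
    · rintro ⟨⟩; exact Or.inl ⟨rfl, rfl⟩
    · rintro (⟨rfl, rfl⟩ | ⟨rfl, rfl⟩)
      · rfl
      · cases x <;> simp_all [cmpT]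

theorem shape_eq_leaf_iff {t : RBT α} : t.shape = .leaf () ↔ t.numLeaves = 1 := by
  cases t with
  | leaf => simp [shape, forget, map, canon, numLeaves]
  | node l r =>
    have := numLeaves_pos l
    have := numLeaves_pos r
    simp only [numLeaves, shape_node, joinShape]
    split_ifs <;> simp only [false_iff] <;> omega

theorem shape_eq_combU_two {t : RBT α} (h : t.numLeaves = 2) : t.shape = combU 2 := by
  cases t with
  | leaf => simp [numLeaves] at h
  | node l r =>
    have := numLeaves_pos l
    have := numLeaves_pos r
    simp only [numLeaves] at h
    rw [shape_node, shape_eq_leaf_iff.2 (by omega), shape_eq_leaf_iff.2 (by omega)]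
    rfl

theorem shape_eq_combU_three {t : RBT α} (h : t.numLeaves = 3) : t.shape = combU 3 := by
  cases t with
  | leaf => simp [numLeaves] at h
  | node l r =>
    have := numLeaves_pos l
    have := numLeaves_pos r
    simp only [numLeaves] at h
    rw [shape_node, show combU 3 = .node (.leaf ()) (combU 2) from rfl,
      joinShape_eq_node_leaf_iff]
    rcases (by omega : l.numLeaves = 1 ∧ r.numLeaves = 2 ∨ l.numLeaves = 2 ∧ r.numLeaves = 1)
      with ⟨hl, hr⟩ | ⟨hl, hr⟩
    · exact Or.inl ⟨shape_eq_leaf_iff.2 hl, shape_eq_combU_two hr⟩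
    · exact Or.inr ⟨shape_eq_combU_two hl, shape_eq_leaf_iff.2 hr⟩

variable [DecidableEq α] [DecidableEq β]

theorem restrict_eq_none_iff {A : Finset α} {t : RBT α} :
    t.restrict A = none ↔ ∀ a ∈ t.leaves, a ∉ A := by
  induction t with
  | leaf a => by_cases h : a ∈ A <;> simp [restrict, leaves, h]
  | node l r ihl ihr =>
    simp only [restrict, leaves, Multiset.mem_add, or_imp, forall_and, ← ihl, ← ihr]
    cases restrict A l <;> cases restrict A r <;> simp

theorem leaves_restrict {A : Finset α} {t t' : RBT α} (h : t.restrict A = some t') :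
    t'.leaves = t.leaves.filter (· ∈ A) := by
  induction t generalizing t' with
  | leaf a =>
    by_cases ha : a ∈ A <;> simp only [restrict, ha, if_true, if_false, reduceCtorEq,
      Option.some_inj] at h
    subst h
    simp [leaves, Multiset.filter_singleton, ha]
  | node l r ihl ihr =>
    have hfl := fun h => Multiset.filter_eq_nil.2 ((restrict_eq_none_iff (t := l) (A := A)).1 h)
    have hfr := fun h => Multiset.filter_eq_nil.2 ((restrict_eq_none_iff (t := r) (A := A)).1 h)
    simp only [restrict] at h
    cases hl : restrict A l <;> cases hr : restrict A r <;>
      simp only [hl, hr, reduceCtorEq, Option.some_inj] at h <;> subst h <;>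
      simp [leaves, Multiset.filter_add, hfl, hfr, ihl, ihr, hl, hr]

theorem restrict_congr {A B : Finset α} {t : RBT α} (h : ∀ a ∈ t.leaves, a ∈ A ↔ a ∈ B) :
    t.restrict A = t.restrict B := by
  induction t with
  | leaf a => simp [restrict, h a (by simp [leaves])]
  | node l r ihl ihr =>
    simp only [restrict, ihl (fun a ha => h a (by simp [leaves, ha])),
      ihr (fun a ha => h a (by simp [leaves, ha]))]

theorem restrict_map {f : α → β} (hf : Function.Injective f) (A : Finset α) (t : RBT α) :
    (t.map f).restrict (A.image f) = (t.restrict A).map (map f) := by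
  induction t with
  | leaf a => by_cases h : a ∈ A <;> simp [map, restrict, hf.mem_finset_image, h]
  | node l r ihl ihr =>
    simp only [map, restrict, ihl, ihr]
    cases restrict A l <;> cases restrict A r <;> rfl

def restrictShape (A : Finset α) (t : RBT α) : Option UTree := (t.restrict A).map shape

theorem restrictShape_node (A : Finset α) (l r : RBT α) :
    restrictShape A (node l r) =
      Option.merge joinShape (restrictShape A l) (restrictShape A r) := by
  simp only [restrictShape, restrict]
  cases restrict A l <;> cases restrict A r <;> rfl

theorem restrictShape_map {f : α → β} (hf : Function.Injective f) (A : Finset α) (t : RBT α) :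
    restrictShape (A.image f) (t.map f) = restrictShape A t := by
  rw [restrictShape, restrictShape, restrict_map hf, Option.map_map]
  exact Option.map_congr fun t' _ => shape_map f t'

theorem restrictShape_congr {A B : Finset α} {t : RBT α}
    (h : ∀ a ∈ t.leaves, a ∈ A ↔ a ∈ B) : restrictShape A t = restrictShape B t := by
  rw [restrictShape, restrictShape, restrict_congr h]

def subsetCount (t : RBT α) (s : UTree) : ℕ :=
  #{A ∈ t.leaves.toFinset.powerset | restrictShape A t = some s}

theorem subsetCount_map {f : α → β} (hf : Function.Injective f) (t : RBT α) (s : UTree) :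
    subsetCount (t.map f) s = subsetCount t s := by
  rw [subsetCount, subsetCount, leaves_map, Multiset.toFinset_map, powerset_image, filter_image,
    card_image_of_injective _ (image_injective hf)]
  simp only [restrictShape_map hf]

variable {A : Finset α} {t : RBT α}

theorem restrictShape_eq_none_iff (hA : A ⊆ t.leaves.toFinset) :
    restrictShape A t = none ↔ A = ∅ := by
  rw [restrictShape, Option.map_eq_none_iff, restrict_eq_none_iff]
  refine ⟨fun h => eq_empty_of_forall_notMem fun a ha => ?_, fun h => by simp [h]⟩
  exact h a (Multiset.mem_toFinset.1 (hA ha)) ha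

theorem numLeaves_of_restrict_eq_some (hn : t.leaves.Nodup) (hA : A ⊆ t.leaves.toFinset)
    {t' : RBT α} (h : t.restrict A = some t') : t'.numLeaves = #A := by
  have hval : t'.leaves = A.val := by
    rw [leaves_restrict h]
    refine (Multiset.Nodup.ext (hn.filter _) A.nodup).2 fun a => ?_
    simpa using fun ha => Multiset.mem_toFinset.1 (hA ha)
  rw [← card_leaves, hval, card_val]

theorem numLeaves_of_restrictShape_eq_some (hn : t.leaves.Nodup) (hA : A ⊆ t.leaves.toFinset)
    {s : UTree} (h : restrictShape A t = some s) : s.numLeaves = #A := by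
  obtain ⟨t', ht', rfl⟩ := Option.map_eq_some_iff.1 h
  rw [numLeaves_shape, numLeaves_of_restrict_eq_some hn hA ht']

theorem restrictShape_eq_some_iff_card (hn : t.leaves.Nodup) (hA : A ⊆ t.leaves.toFinset)
    {s : UTree} (hs : ∀ t' : RBT α, t'.numLeaves = s.numLeaves → t'.shape = s) :
    restrictShape A t = some s ↔ #A = s.numLeaves := by
  refine ⟨fun h => (numLeaves_of_restrictShape_eq_some hn hA h).symm, fun hc => ?_⟩
  rcases h : t.restrict A with _ | t'
  · have hA0 : A = ∅ := (restrictShape_eq_none_iff hA).1 (by simp [restrictShape, h])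
    simp [hA0, (numLeaves_pos s).ne] at hc
  · have ht' := numLeaves_of_restrict_eq_some hn hA h
    rw [restrictShape, h, Option.map_some, hs t' (ht' ▸ hc)]

theorem subsetCount_eq_choose (hn : t.leaves.Nodup) {s : UTree}
    (hs : ∀ t' : RBT α, t'.numLeaves = s.numLeaves → t'.shape = s) :
    subsetCount t s = t.numLeaves.choose s.numLeaves := by
  rw [subsetCount, filter_congr fun A hA =>
      restrictShape_eq_some_iff_card hn (mem_powerset.1 hA) hs,
    ← powersetCard_eq_filter, card_powersetCard, Multiset.toFinset_card_of_nodup hn,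
    card_leaves]

theorem card_restrictShape_eq_none :
    #{A ∈ t.leaves.toFinset.powerset | restrictShape A t = none} = 1 := by
  rw [card_eq_one]
  refine ⟨∅, ext fun A => ?_⟩
  simp only [mem_filter, mem_powerset, mem_singleton]
  exact ⟨fun ⟨hA, h⟩ => (restrictShape_eq_none_iff hA).1 h,
    fun hA => ⟨hA ▸ empty_subset _, (restrictShape_eq_none_iff (hA ▸ empty_subset _)).2 hA⟩⟩

/-- The four cases on the right are mutually exclusive because `u ≠ leaf`. -/
theorem ite_merge_joinShape_eq (a b : Option UTree) {u : UTree} (hu : u ≠ .leaf ()) :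
    (if Option.merge joinShape a b = some (.node (.leaf ()) u) then 1 else 0 : ℕ) =
      (if a = some (.node (.leaf ()) u) then 1 else 0) * (if b = none then 1 else 0)
        + (if a = none then 1 else 0) * (if b = some (.node (.leaf ()) u) then 1 else 0)
        + (if a = some (.leaf ()) then 1 else 0) * (if b = some u then 1 else 0)
        + (if a = some u then 1 else 0) * (if b = some (.leaf ()) then 1 else 0) := by
  rcases a with _ | x <;> rcases b with _ | y <;>
    simp only [Option.merge, Option.some_inj, reduceCtorEq, joinShape_eq_node_leaf_iff]
  any_goals simp
  by_cases hx : x = .leaf () <;> by_cases hy : y = .leaf () <;> simp_all [eq_comm (a := u)]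

theorem subsetCount_node {L R : RBT α} (hn : (node L R).leaves.Nodup) {u : UTree}
    (hu : u ≠ .leaf ()) :
    subsetCount (node L R) (.node (.leaf ()) u) =
      subsetCount L (.node (.leaf ()) u) + subsetCount R (.node (.leaf ()) u)
        + L.numLeaves * subsetCount R u + subsetCount L u * R.numLeaves := by
  obtain ⟨hnL, hnR, hdis⟩ := Multiset.nodup_add.1 hn
  have hdisF : Disjoint L.leaves.toFinset R.leaves.toFinset :=
    Multiset.disjoint_toFinset.2 hdis
  have hL (A B : Finset α) (hB : B ⊆ R.leaves.toFinset) :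
      restrictShape (A ∪ B) L = restrictShape A L :=
    restrictShape_congr fun a ha => by
      simpa using fun hb => absurd (hB hb) (disjoint_left.1 hdisF (Multiset.mem_toFinset.2 ha))
  have hR (A B : Finset α) (hA : A ⊆ L.leaves.toFinset) :
      restrictShape (A ∪ B) R = restrictShape B R :=
    restrictShape_congr fun a ha => by
      simpa using fun hb => absurd (hA hb) (disjoint_right.1 hdisF (Multiset.mem_toFinset.2 ha))
  have hleaf (t : RBT α) (ht : t.leaves.Nodup) : subsetCount t (.leaf ()) = t.numLeaves :=
    (subsetCount_eq_choose ht fun _ h => shape_eq_leaf_iff.2 h).trans (Nat.choose_one_right _)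
  simp only [subsetCount, card_filter, leaves, Multiset.toFinset_add,
    sum_powerset_union_of_disjoint hdisF, restrictShape_node]
  rw [sum_congr rfl fun A hA => sum_congr rfl fun B hB => by
    rw [hL A B (mem_powerset.1 hB), hR A B (mem_powerset.1 hA), ite_merge_joinShape_eq _ _ hu]]
  simp only [sum_add_distrib, ← sum_mul_sum, ← card_filter, card_restrictShape_eq_none]
  rw [← subsetCount, ← subsetCount, ← subsetCount, ← subsetCount, ← subsetCount, ← subsetCount,
    hleaf L hnL, hleaf R hnR]
  ring

end RBT

theorem labelFrom_snd (u : UTree) (k : ℕ) : (labelFrom u k).2 = k + u.numLeaves := by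
  induction u generalizing k with
  | leaf => rfl
  | node l r ihl ihr =>
    simp only [labelFrom, RBT.numLeaves, ihl, ihr]
    omega

theorem labelFrom_add (u : UTree) (j k : ℕ) :
    (labelFrom u (j + k)).1 = (labelFrom u j).1.map (· + k) := by
  induction u generalizing j with
  | leaf => rfl
  | node l r ihl ihr =>
    simp only [labelFrom, RBT.map, labelFrom_snd]
    rw [show j + k + l.numLeaves = j + l.numLeaves + k by omega, ihl, ihr]

theorem label_node (l r : UTree) :
    label (.node l r) = .node (label l) ((label r).map (· + l.numLeaves)) := by
  simp only [label, labelFrom, labelFrom_snd, zero_add]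
  rw [← labelFrom_add, zero_add]

theorem leaves_label (u : UTree) : (label u).leaves = Multiset.range u.numLeaves := by
  induction u with
  | leaf => rfl
  | node l r ihl ihr =>
    rw [label_node, RBT.leaves, RBT.leaves_map, ihl, ihr, RBT.numLeaves, Multiset.range_add]
    simp [add_comm]

theorem nodup_leaves_label (u : UTree) : (label u).leaves.Nodup := by
  rw [leaves_label]
  exact Multiset.nodup_range _

theorem numLeaves_label (u : UTree) : (label u).numLeaves = u.numLeaves := by
  rw [← RBT.card_leaves, leaves_label, Multiset.card_range]

theorem countRestr_eq_subsetCount (u s : UTree) :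
    countRestr u s s.numLeaves = (label u).subsetCount (RBT.canon s) := by
  rw [countRestr, RBT.subsetCount, powersetCard_eq_filter, filter_filter]
  refine congrArg card (filter_congr fun A hA => ⟨fun h => h.2, fun h => ⟨?_, h⟩⟩)
  rw [← RBT.numLeaves_canon s, RBT.numLeaves_of_restrictShape_eq_some (nodup_leaves_label u)
    (mem_powerset.1 hA) h]

def combCount (u : UTree) (k : ℕ) : ℕ := countRestr u (combU k) k

theorem c5_eq_combCount (u : UTree) : c5 u = combCount u 5 := rfl

theorem combCount_eq_subsetCount (u : UTree) {k : ℕ} (hk : 1 ≤ k) :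
    combCount u k = (label u).subsetCount (combU k) := by
  rw [combCount, ← RBT.canon_combU k, ← countRestr_eq_subsetCount, RBT.numLeaves_combU k hk,
    RBT.canon_combU]

theorem combCount_leaf {k : ℕ} (hk : 2 ≤ k) : combCount (.leaf ()) k = 0 := by
  simp [combCount, countRestr, label, labelFrom, RBT.leaves, powersetCard_eq_empty.2,
    show 1 < k by omega]

theorem combCount_three (u : UTree) : combCount u 3 = u.numLeaves.choose 3 := by
  rw [combCount_eq_subsetCount u (by norm_num),
    RBT.subsetCount_eq_choose (nodup_leaves_label u) fun _ h => RBT.shape_eq_combU_three h,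
    numLeaves_label]
  rfl

theorem combCount_node (l r : UTree) {k : ℕ} (hk : 3 ≤ k) :
    combCount (.node l r) (k + 1) = combCount l (k + 1) + combCount r (k + 1)
      + l.numLeaves * combCount r k + combCount l k * r.numLeaves := by
  obtain ⟨j, rfl⟩ : ∃ j, k = j + 1 := ⟨k - 1, by omega⟩
  have hshift : Function.Injective (· + l.numLeaves) := add_left_injective _
  have hnode := RBT.subsetCount_node (L := label l) (R := (label r).map (· + l.numLeaves))
    (u := combU (j + 1)) (by rw [← label_node]; exact nodup_leaves_label _)
    (by cases j <;> simp_all [combU])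
  simp only [combCount_eq_subsetCount _ (show 1 ≤ j + 1 + 1 by omega),
    combCount_eq_subsetCount _ (show 1 ≤ j + 1 by omega), label_node]
  rw [show combU (j + 1 + 1) = .node (.leaf ()) (combU (j + 1)) from rfl, hnode,
    RBT.subsetCount_map hshift, RBT.subsetCount_map hshift, RBT.numLeaves_map, numLeaves_label,
    numLeaves_label]

theorem Nat.add_choose_three (a b : ℕ) :
    (a + b).choose 3 = a.choose 3 + a.choose 2 * b + a * b.choose 2 + b.choose 3 := by
  rw [Nat.add_choose_eq, Nat.sum_antidiagonal_eq_sum_range_succ_mk]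
  simp [sum_range_succ]
  ring

section Switch

variable (t1 t2 : UTree)

theorem combCount_four_switch :
    combCount (.node (.node t1 t2) (.leaf ())) 4 =
      combCount (.node t1 (.node t2 (.leaf ()))) 4 + t1.numLeaves.choose 2 * t2.numLeaves := by
  simp only [combCount_node _ _ (le_refl 3), combCount_three,
    combCount_leaf (by norm_num : 2 ≤ 4), RBT.numLeaves, Nat.add_choose_three,
    show (1 : ℕ).choose 3 = 0 from rfl, show (1 : ℕ).choose 2 = 0 from rfl]
  ring

theorem combCount_five_switch :
    combCount (.node (.node t1 t2) (.leaf ())) 5 =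
      combCount (.node t1 (.node t2 (.leaf ()))) 5 + t1.numLeaves.choose 3 * t2.numLeaves := by
  simp only [combCount_node _ _ (by norm_num : 3 ≤ 4), combCount_node _ _ (le_refl 3),
    combCount_three, combCount_leaf (by norm_num : 2 ≤ 4), combCount_leaf (by norm_num : 2 ≤ 5),
    RBT.numLeaves, show (1 : ℕ).choose 3 = 0 from rfl]
  ring

end Switch

def Ctx.numLeaves : Ctx → ℕ
  | .hole => 0
  | .nodeL c r => c.numLeaves + r.numLeaves
  | .nodeR l c => l.numLeaves + c.numLeaves

theorem Ctx.numLeaves_fill (C : Ctx) (X : UTree) :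
    (C.fill X).numLeaves = C.numLeaves + X.numLeaves := by
  induction C with
  | hole => simp [Ctx.fill, Ctx.numLeaves]
  | nodeL c r ih => simp only [Ctx.fill, Ctx.numLeaves, RBT.numLeaves, ih]; omega
  | nodeR l c ih => simp only [Ctx.fill, Ctx.numLeaves, RBT.numLeaves, ih]; omega

theorem combCount_fill (C : Ctx) {X Y : UTree} (hXY : X.numLeaves = Y.numLeaves) {d₄ d₅ : ℕ}
    (h₄ : combCount X 4 = combCount Y 4 + d₄) (h₅ : combCount X 5 = combCount Y 5 + d₅) :
    combCount (C.fill X) 4 = combCount (C.fill Y) 4 + d₄ ∧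
      combCount (C.fill X) 5 = combCount (C.fill Y) 5 + d₅ + d₄ * C.numLeaves := by
  have hfill (c : Ctx) : (c.fill X).numLeaves = (c.fill Y).numLeaves := by
    rw [Ctx.numLeaves_fill, Ctx.numLeaves_fill, hXY]
  induction C with
  | hole => simpa [Ctx.fill, Ctx.numLeaves] using ⟨h₄, h₅⟩
  | nodeL c _ ih | nodeR _ c ih =>
    simp only [Ctx.fill, Ctx.numLeaves, combCount_node _ _ (le_refl 3),
      combCount_node _ _ (by norm_num : 3 ≤ 4), combCount_three, hfill, ih.1, ih.2]
    constructor <;> ring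

/-- Let `T` have an internal vertex `z` with children an
internal vertex `a` (with child subtrees `T₁, T₂`, `n₁ ≥ n₂`, `n₁ + n₂ ≥ 3`) and
a leaf `l`, and let `T'` be obtained by replacing the subtree below `z` with the
shape whose root has children `T₁` and a vertex with children `T₂` and `l`.
Then `c₅(T) ≥ c₅(T')`, strictly if `n ≥ 7`; moreover for the subtrees below `z`,
`c₅(T_z) − c₅(T'_z) = C(n₁, 3)·n₂`. -/
theorem c5_switch_leaf (C : Ctx) (t1 t2 : UTree)
    (h12 : t2.numLeaves ≤ t1.numLeaves) (h3 : 3 ≤ t1.numLeaves + t2.numLeaves) :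
    c5 (C.fill (RBT.node t1 (RBT.node t2 (RBT.leaf ())))) ≤
        c5 (C.fill (RBT.node (RBT.node t1 t2) (RBT.leaf ()))) ∧
      (7 ≤ (C.fill (RBT.node (RBT.node t1 t2) (RBT.leaf ()))).numLeaves →
        c5 (C.fill (RBT.node t1 (RBT.node t2 (RBT.leaf ())))) <
          c5 (C.fill (RBT.node (RBT.node t1 t2) (RBT.leaf ())))) ∧
      c5 (RBT.node (RBT.node t1 t2) (RBT.leaf ())) =
        c5 (RBT.node t1 (RBT.node t2 (RBT.leaf ()))) +
          Nat.choose t1.numLeaves 3 * t2.numLeaves := by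
  simp only [c5_eq_combCount]
  have h5 := (combCount_fill C (by simp only [RBT.numLeaves]; omega)
    (combCount_four_switch t1 t2) (combCount_five_switch t1 t2)).2
  have hn2 := RBT.numLeaves_pos t2
  refine ⟨by omega, fun h7 => ?_, combCount_five_switch t1 t2⟩
  rw [Ctx.numLeaves_fill] at h7
  simp only [RBT.numLeaves] at h7
  rcases Nat.eq_zero_or_pos C.numLeaves with h0 | h0
  · have hgain := Nat.mul_pos (Nat.choose_pos (show 3 ≤ t1.numLeaves by omega)) hn2
    omega
  · have hgain :=
      Nat.mul_pos (Nat.mul_pos (Nat.choose_pos (show 2 ≤ t1.numLeaves by omega)) hn2) h0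
    omega
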